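/- arXiv:2603.05403 — 3 statements merged into one kernel-verified Lean document; each statement's English description precedes it below -/
import Mathlib

section
/- Let 0 ≤ a < b and let u ∈ H^1(a,b) with u(b) = 0. Then for every p ≥ 0 there exists a constant C_p < ∞, independent of a, b, and u, such that ∫_a^b (u(x)/(b−x))^2 x^p dx ≤ C_p ∫_a^b (u'(x))^2 x^p dx. -/
open MeasureTheory intervalIntegral
open Filter Topology

open Set Filter Topology in
private theorem weighted_hardy_stepA (p : ℝ) (hp : 0 ≤ p) (a b c : ℝ) (u u' : ℝ → ℝ) (ha : 0 ≤ a) (hab : a < b)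
    (hc : c ∈ Set.Ioo a b)
    (hderiv : ∀ x ∈ Set.Icc a b, HasDerivAt u (u' x) x)
    (hInt1 : IntervalIntegrable (fun x => (u x / (b - x))^2 * x ^ p) volume a b)
    (hInt2 : IntervalIntegrable (fun x => (u' x)^2 * x ^ p) volume a b) :
    ∫ x in a..c, (u x / (b - x))^2 * x ^ p
      ≤ 2 * ((u c)^2 * (b - c)⁻¹ * c ^ p) + 4 * ∫ x in a..b, (u' x)^2 * x ^ p := by
  obtain ⟨hac, hcb⟩ := hc
  set f : ℝ → ℝ := fun x => (u x / (b - x))^2 * x ^ p with hf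
  set h : ℝ → ℝ := fun x => (u' x)^2 * x ^ p with hh
  set g2 : ℝ → ℝ := fun x => 2 * u x * u' x * (b - x)⁻¹ * x ^ p with hg2
  set g3 : ℝ → ℝ := fun x => (u x)^2 * (b - x)⁻¹ * (p * x ^ (p - 1)) with hg3
  set Q : ℝ → ℝ := fun y => (u y)^2 * (b - y)⁻¹ * y ^ p with hQ
  have hpow_cont : Continuous (fun x : ℝ => x ^ p) :=
    continuousOn_univ.1 (continuousOn_id.rpow_const fun x _ => Or.inr hp)
  have hucont : ContinuousOn u (Set.Icc a b) := fun x hx =>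
    (hderiv x hx).continuousAt.continuousWithinAt
  have hIccsub : Set.Icc a c ⊆ Set.Icc a b := Set.Icc_subset_Icc le_rfl hcb.le
  have hIocsub : Set.uIoc a c ⊆ Set.Icc a b := by
    rw [Set.uIoc_of_le hac.le]
    exact fun x hx => ⟨hx.1.le, hx.2.trans hcb.le⟩
  have hbx_pos : ∀ x ∈ Set.Icc a c, 0 < b - x := fun x hx =>
    sub_pos.2 (lt_of_le_of_lt hx.2 hcb)
  have hbx_ne : ∀ x ∈ Set.Icc a c, b - x ≠ 0 := fun x hx => (hbx_pos x hx).ne'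
  have hinv_cont : ContinuousOn (fun x : ℝ => (b - x)⁻¹) (Set.Icc a c) :=
    ((continuous_const.sub continuous_id).continuousOn).inv₀ hbx_ne
  -- continuity of f on Icc a c
  have hfcont : ContinuousOn f (Set.Icc a c) := by
    apply ContinuousOn.mul
    · exact ((hucont.mono hIccsub).div
        (continuous_const.sub continuous_id).continuousOn hbx_ne).pow 2
    · exact hpow_cont.continuousOn
  have hf_int : IntervalIntegrable f volume a c := by
    apply ContinuousOn.intervalIntegrable
    rwa [Set.uIcc_of_le hac.le]
  have hh_int : IntervalIntegrable h volume a c :=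
    hInt2.mono_set (by rw [Set.uIcc_of_le hac.le, Set.uIcc_of_le hab.le]; exact hIccsub)
  -- measurability of u'
  have hu'm : AEStronglyMeasurable u' (volume.restrict (Set.uIoc a c)) := by
    apply (measurable_deriv u).aestronglyMeasurable.congr
    refine (ae_restrict_iff' measurableSet_uIoc).2 (Filter.Eventually.of_forall fun x hx => ?_)
    exact (hderiv x (hIocsub hx)).deriv
  have hum : AEStronglyMeasurable u (volume.restrict (Set.uIoc a c)) :=
    (hucont.mono hIocsub).aestronglyMeasurable measurableSet_uIoc
  have hinvm : AEStronglyMeasurable (fun x : ℝ => (b - x)⁻¹)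
      (volume.restrict (Set.uIoc a c)) :=
    ((measurable_const.sub measurable_id).inv).aestronglyMeasurable
  -- pointwise bound on g2
  have hg2_bound : ∀ x ∈ Set.Icc a c, |g2 x| ≤ (1/2) * f x + 2 * h x := by
    intro x hx
    have hx0 : (0:ℝ) ≤ x := le_trans ha hx.1
    have hxp : (0:ℝ) ≤ x ^ p := Real.rpow_nonneg hx0 p
    have hb : 0 < b - x := hbx_pos x hx
    simp only [hf, hh, hg2]
    have hrw : 2 * u x * u' x * (b - x)⁻¹ = 2 * (u x / (b - x)) * u' x := by
      field_simp
    have h1 : |2 * u x * u' x * (b - x)⁻¹| ≤ (1/2) * (u x / (b - x))^2 + 2 * (u' x)^2 := by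
      rw [hrw, abs_le]
      constructor
      · nlinarith [sq_nonneg (u x / (b - x) + 2 * u' x)]
      · nlinarith [sq_nonneg (u x / (b - x) - 2 * u' x)]
    have habs : |2 * u x * u' x * (b - x)⁻¹ * x ^ p|
        = |2 * u x * u' x * (b - x)⁻¹| * x ^ p := by
      rw [abs_mul, abs_of_nonneg hxp]
    rw [habs]
    nlinarith [mul_le_mul_of_nonneg_right h1 hxp]
  have hG_int : IntervalIntegrable (fun x => (1/2) * f x + 2 * h x) volume a c :=
    (hf_int.const_mul _).add (hh_int.const_mul _)
  have hG_nonneg : ∀ x ∈ Set.Icc a c, 0 ≤ (1/2) * f x + 2 * h x := by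
    intro x hx
    have hx0 : (0:ℝ) ≤ x := le_trans ha hx.1
    have hxp : (0:ℝ) ≤ x ^ p := Real.rpow_nonneg hx0 p
    have h1 : 0 ≤ f x := mul_nonneg (sq_nonneg _) hxp
    have h2 : 0 ≤ h x := mul_nonneg (sq_nonneg _) hxp
    linarith
  have hg2_int : IntervalIntegrable g2 volume a c := by
    refine hG_int.mono_fun ((((aestronglyMeasurable_const.mul hum).mul hu'm).mul hinvm).mul
      hpow_cont.aestronglyMeasurable) ?_
    refine (ae_restrict_iff' measurableSet_uIoc).2 (Filter.Eventually.of_forall fun x hx => ?_)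
    have hx' : x ∈ Set.Icc a c := by
      rw [Set.uIoc_of_le hac.le] at hx; exact ⟨hx.1.le, hx.2⟩
    show ‖g2 x‖ ≤ ‖(1/2) * f x + 2 * h x‖
    rw [Real.norm_eq_abs, Real.norm_eq_abs, abs_of_nonneg (hG_nonneg x hx')]
    exact hg2_bound x hx'
  -- integrability of g3
  have hg3_int : IntervalIntegrable g3 volume a c := by
    rcases hp.eq_or_lt with rfl | hp0
    · have : g3 = fun _ => (0:ℝ) := by
        funext x; simp [hg3]
      rw [this]; exact intervalIntegrable_const
    · have hrp : IntervalIntegrable (fun x : ℝ => p * x ^ (p-1)) volume a c :=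
        (intervalIntegrable_rpow' (by linarith)).const_mul p
      apply hrp.continuousOn_mul
      rw [Set.uIcc_of_le hac.le]
      exact ((hucont.mono hIccsub).pow 2).mul hinv_cont
  -- the derivative of Q
  have hQcont : ContinuousOn Q (Set.Icc a c) :=
    (((hucont.mono hIccsub).pow 2).mul hinv_cont).mul hpow_cont.continuousOn
  have hQd : ∀ x ∈ Set.Ioo a c, HasDerivAt Q (g2 x + (f x + g3 x)) x := by
    intro x hx
    have hx0 : x ≠ 0 := (lt_of_le_of_lt ha hx.1).ne'
    have hxb : x ∈ Set.Icc a b := ⟨hx.1.le, (hx.2.trans hcb).le⟩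
    have hbne : b - x ≠ 0 := (sub_pos.2 (hx.2.trans hcb)).ne'
    have h1 : HasDerivAt (fun y => (u y)^2) (2 * u x * u' x) x := by
      have := (hderiv x hxb).fun_pow 2
      refine this.congr_deriv ?_
      push_cast; ring
    have h2 : HasDerivAt (fun y : ℝ => (b - y)⁻¹) (-(-1) / (b - x)^2) x :=
      ((hasDerivAt_id x).const_sub b).inv hbne
    have h3 : HasDerivAt (fun y : ℝ => y ^ p) (p * x ^ (p-1)) x :=
      Real.hasDerivAt_rpow_const (Or.inl hx0)
    have := (h1.fun_mul h2).fun_mul h3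
    refine this.congr_deriv ?_
    simp only [hf, hg2, hg3, hQ]
    field_simp
    ring
  have hsum_int : IntervalIntegrable (fun x => g2 x + (f x + g3 x)) volume a c :=
    hg2_int.add (hf_int.add hg3_int)
  have hFTC : ∫ x in a..c, (g2 x + (f x + g3 x)) = Q c - Q a :=
    integral_eq_sub_of_hasDeriv_right_of_le hac.le hQcont
      (fun x hx => (hQd x hx).hasDerivWithinAt) hsum_int
  rw [integral_add hg2_int (hf_int.add hg3_int), integral_add hf_int hg3_int] at hFTC
  have hQa : 0 ≤ Q a :=
    mul_nonneg (mul_nonneg (sq_nonneg _) (inv_nonneg.2 (sub_nonneg.2 hab.le)))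
      (Real.rpow_nonneg ha p)
  have hg3_nonneg : 0 ≤ ∫ x in a..c, g3 x := by
    apply intervalIntegral.integral_nonneg hac.le
    intro x hx
    exact mul_nonneg (mul_nonneg (sq_nonneg _) (inv_nonneg.2 (hbx_pos x hx).le))
      (mul_nonneg hp (Real.rpow_nonneg (le_trans ha hx.1) _))
  have hneg2 : -(∫ x in a..c, g2 x) ≤ (1/2) * (∫ x in a..c, f x) + 2 * (∫ x in a..c, h x) := by
    rw [← intervalIntegral.integral_neg]
    have hmono : (∫ x in a..c, -g2 x) ≤ ∫ x in a..c, ((1/2) * f x + 2 * h x) :=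
      intervalIntegral.integral_mono_on hac.le
        (by exact hg2_int.neg : IntervalIntegrable (fun x => -g2 x) volume a c) hG_int
        (fun x hx => by have := (abs_le.1 (hg2_bound x hx)).1; linarith)
    refine le_trans hmono (le_of_eq ?_)
    rw [integral_add (hf_int.const_mul _) (hh_int.const_mul _),
      intervalIntegral.integral_const_mul, intervalIntegral.integral_const_mul]
  have hhac : (∫ x in a..c, h x) ≤ ∫ x in a..b, h x := by
    apply intervalIntegral.integral_mono_interval le_rfl hac.le hcb.le
    · refine (ae_restrict_iff' measurableSet_Ioc).2 (Filter.Eventually.of_forall fun x hx => ?_)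
      exact mul_nonneg (sq_nonneg _) (Real.rpow_nonneg (le_trans ha hx.1.le) _)
    · exact hInt2
  have hQc : Q c = (u c)^2 * (b - c)⁻¹ * c ^ p := rfl
  clear_value f h g2 g3 Q
  show (∫ x in a..c, f x) ≤ 2 * ((u c)^2 * (b - c)⁻¹ * c ^ p) + 4 * ∫ x in a..b, h x
  linarith [hFTC, hQa, hg3_nonneg, hneg2, hhac, hQc]

/-- Weighted one-dimensional Hardy inequality: for every `p ≥ 0` there is a
constant `C_p`, independent of `a`, `b` and `u`, such that for all
`0 ≤ a < b` and every `u ∈ H¹(a,b)` (modeled as a function with derivative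
`u'` on `[a,b]`) with `u b = 0`,
`∫_a^b (u/(b-x))² xᵖ ≤ C_p ∫_a^b (u')² xᵖ`. -/
theorem weighted_hardy_inequality (p : ℝ) (hp : 0 ≤ p) :
    ∃ C : ℝ, 0 ≤ C ∧ ∀ (a b : ℝ) (u u' : ℝ → ℝ), 0 ≤ a → a < b →
      (∀ x ∈ Set.Icc a b, HasDerivAt u (u' x) x) →
      u b = 0 →
      IntervalIntegrable (fun x => (u x / (b - x))^2 * x ^ p) volume a b →
      IntervalIntegrable (fun x => (u' x)^2 * x ^ p) volume a b →
      ∫ x in a..b, (u x / (b - x))^2 * x ^ p ≤ C * ∫ x in a..b, (u' x)^2 * x ^ p := by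
  refine ⟨4, by norm_num, ?_⟩
  intro a b u u' ha hab hderiv hub hInt1 hInt2
  have hb0 : 0 < b := lt_of_le_of_lt ha hab
  -- limit of the primitive
  have T1 : Tendsto (fun c => ∫ x in a..c, (u x / (b - x))^2 * x ^ p) (𝓝[<] b)
      (𝓝 (∫ x in a..b, (u x / (b - x))^2 * x ^ p)) := by
    have hcont := intervalIntegral.continuousOn_primitive_interval' hInt1 Set.left_mem_uIcc
    have := (hcont b Set.right_mem_uIcc).tendsto
    refine this.mono_left ?_
    rw [← nhdsWithin_Ico_eq_nhdsLT hab, Set.uIcc_of_le hab.le]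
    exact nhdsWithin_mono b Set.Ico_subset_Icc_self
  -- limit of the boundary term
  have hQ0 : Tendsto (fun c => (u c)^2 * (b - c)⁻¹ * c ^ p) (𝓝[<] b) (𝓝 0) := by
    have hslope : Tendsto (slope u b) (𝓝[<] b) (𝓝 (u' b)) :=
      (hasDerivAt_iff_tendsto_slope.1 (hderiv b (Set.right_mem_Icc.2 hab.le))).mono_left
        (nhdsWithin_mono b fun x hx => ne_of_lt hx)
    have hbc : Tendsto (fun c : ℝ => b - c) (𝓝[<] b) (𝓝 0) := by
      have h0 : Tendsto (fun c : ℝ => b - c) (𝓝 b) (𝓝 (b - b)) :=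
        (continuous_const.sub continuous_id).tendsto b
      rw [sub_self] at h0
      exact h0.mono_left nhdsWithin_le_nhds
    have hcp : Tendsto (fun c : ℝ => c ^ p) (𝓝[<] b) (𝓝 (b ^ p)) :=
      ((Real.continuousAt_rpow_const b p (Or.inl hb0.ne')).tendsto).mono_left nhdsWithin_le_nhds
    have hmain : Tendsto (fun c => (slope u b c)^2 * (b - c) * (c ^ p)) (𝓝[<] b)
        (𝓝 ((u' b)^2 * 0 * b ^ p)) := ((hslope.pow 2).mul hbc).mul hcp
    rw [show (u' b)^2 * 0 * b ^ p = 0 by ring] at hmain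
    refine hmain.congr' ?_
    filter_upwards [self_mem_nhdsWithin] with c hc
    have hcb : c ≠ b := ne_of_lt hc
    have hbne : b - c ≠ 0 := sub_ne_zero.2 (ne_of_gt hc)
    rw [slope_def_field, hub]
    rw [div_pow, show (c - b)^2 = (b - c)^2 by ring]
    field_simp
    ring
  have T2 : Tendsto (fun c => 2 * ((u c)^2 * (b - c)⁻¹ * c ^ p)
      + 4 * ∫ x in a..b, (u' x)^2 * x ^ p) (𝓝[<] b)
      (𝓝 (4 * ∫ x in a..b, (u' x)^2 * x ^ p)) := by
    have := (hQ0.const_mul 2).add (tendsto_const_nhds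
      (x := 4 * ∫ x in a..b, (u' x)^2 * x ^ p) (f := 𝓝[<] b))
    simpa using this
  have hev : ∀ᶠ c in 𝓝[<] b, (∫ x in a..c, (u x / (b - x))^2 * x ^ p)
      ≤ 2 * ((u c)^2 * (b - c)⁻¹ * c ^ p) + 4 * ∫ x in a..b, (u' x)^2 * x ^ p := by
    filter_upwards [Ioo_mem_nhdsLT hab] with c hc
    exact weighted_hardy_stepA p hp a b c u u' ha hab hc hderiv hInt1 hInt2
  exact le_of_tendsto_of_tendsto T1 T2 hev
end

section
/- Let 0 ≤ a < 1, p ≥ 0, and u ∈ H^1(a,1) with u(1) = 0. Then ∫_a^1 u(x)^2 x^p dx ≤ (4/(p+1)^2) ∫_a^1 (u'(x))^2 x^p dx. -/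
open MeasureTheory intervalIntegral Filter Topology

lemma wp_aux (p b : ℝ) (hp : 0 ≤ p) (hb : 0 < b) (hb1 : b ≤ 1)
    (u u' : ℝ → ℝ)
    (hderiv : ∀ x ∈ Set.Icc b 1, HasDerivAt u (u' x) x)
    (hu1 : u 1 = 0)
    (hint1 : IntervalIntegrable (fun x => (u x)^2 * x ^ p) volume b 1)
    (hint2 : IntervalIntegrable (fun x => (u' x)^2 * x ^ p) volume b 1) :
    ∫ x in b..1, (u x)^2 * x ^ p ≤ (4 / (p + 1)^2) * ∫ x in b..1, (u' x)^2 * x ^ p := by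
  set c : ℝ := p + 1 with hc_def
  clear_value c
  have hc : 0 < c := by rw [hc_def]; positivity
  have huIcc : Set.uIcc b 1 = Set.Icc b 1 := Set.uIcc_of_le hb1
  -- continuity of u on [b,1]
  have hu_cont : ContinuousOn u (Set.Icc b 1) := fun x hx =>
    (hderiv x hx).continuousAt.continuousWithinAt
  -- continuity of x ^ p on [b,1]
  have hxp_cont : ContinuousOn (fun x : ℝ => x ^ p) (Set.Icc b 1) := fun x hx =>
    (Real.continuousAt_rpow_const x p (Or.inl (hb.trans_le hx.1).ne')).continuousWithinAt
  have hxc_cont : ContinuousOn (fun x : ℝ => x ^ c) (Set.Icc b 1) := fun x hx =>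
    (Real.continuousAt_rpow_const x c (Or.inl (hb.trans_le hx.1).ne')).continuousWithinAt
  -- a.e. strong measurability of u'
  have hmeas : AEStronglyMeasurable u' (volume.restrict (Set.Ioc b 1)) := by
    refine (measurable_deriv u).aestronglyMeasurable.congr ?_
    filter_upwards [ae_restrict_mem measurableSet_Ioc] with x hx
    exact ((hderiv x ⟨hx.1.le, hx.2⟩).deriv)
  have humeas : AEStronglyMeasurable u (volume.restrict (Set.Ioc b 1)) :=
    (hu_cont.mono Set.Ioc_subset_Icc_self).aestronglyMeasurable measurableSet_Ioc
  -- u'^2 is interval integrable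
  have hu'sq : IntervalIntegrable (fun x => (u' x)^2) volume b 1 := by
    refine (hint2.const_mul ((b ^ p)⁻¹)).mono_fun ((hmeas.pow 2).mono_set ?_) ?_
    · rw [Set.uIoc_of_le hb1]
    · rw [Set.uIoc_of_le hb1]
      filter_upwards [ae_restrict_mem measurableSet_Ioc] with x hx
      have hbp : b ^ p ≤ x ^ p := Real.rpow_le_rpow hb.le hx.1.le hp
      have hbp0 : (0:ℝ) < b ^ p := Real.rpow_pos_of_pos hb p
      have h1 : (1:ℝ) ≤ (b ^ p)⁻¹ * x ^ p := by
        rw [inv_mul_eq_div, le_div_iff₀ hbp0]; simpa using hbp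
      have := mul_le_mul_of_nonneg_left h1 (sq_nonneg (u' x))
      simp only [mul_one] at this
      have hxp0 : (0:ℝ) ≤ x ^ p := (Real.rpow_pos_of_pos (hb.trans hx.1) p).le
      calc ‖(u' x)^2‖ = (u' x)^2 := by rw [Real.norm_eq_abs, abs_of_nonneg (sq_nonneg _)]
        _ ≤ (u' x)^2 * ((b ^ p)⁻¹ * x ^ p) := this
        _ ≤ ‖(b ^ p)⁻¹ * ((u' x)^2 * x ^ p)‖ := by
            rw [Real.norm_eq_abs, abs_of_nonneg (mul_nonneg (inv_nonneg.2 hbp0.le)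
              (mul_nonneg (sq_nonneg _) hxp0))]
            exact le_of_eq (by ring)
  have husq : IntervalIntegrable (fun x => (u x)^2) volume b 1 :=
    ((hu_cont.pow 2).mono (by rw [huIcc])).intervalIntegrable
  -- 2 u u' interval integrable
  have h2uu' : IntervalIntegrable (fun x => 2 * u x * u' x) volume b 1 := by
    refine (husq.add hu'sq).mono_fun ?_ ?_
    · rw [Set.uIoc_of_le hb1]
      exact (((aestronglyMeasurable_const.mul humeas)).mul hmeas)
    · rw [Set.uIoc_of_le hb1]
      filter_upwards with x
      rw [Real.norm_eq_abs, Real.norm_eq_abs]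
      rw [abs_of_nonneg (by positivity : (0:ℝ) ≤ (u x)^2 + (u' x)^2)]
      have := abs_mul_abs_self (u x - u' x)
      have := abs_mul_abs_self (u x + u' x)
      rw [abs_mul, abs_mul, abs_two]
      nlinarith [sq_nonneg (|u x| - |u' x|), abs_nonneg (u x), abs_nonneg (u' x),
        sq_abs (u x), sq_abs (u' x)]
  -- integration by parts
  have hU : ∀ x ∈ Set.uIcc b 1, HasDerivAt (fun x => (u x)^2) (2 * u x * u' x) x := by
    intro x hx
    rw [huIcc] at hx
    have := (hderiv x hx).fun_pow 2
    simpa [mul_comm, mul_assoc] using this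
  have hV : ∀ x ∈ Set.uIcc b 1, HasDerivAt (fun x : ℝ => x ^ c) (c * x ^ p) x := by
    intro x hx
    have h1 : (1:ℝ) ≤ c := by linarith
    have := Real.hasDerivAt_rpow_const (x := x) (p := c) (Or.inr h1)
    simpa [hc_def] using this
  have hcxp : IntervalIntegrable (fun x : ℝ => c * x ^ p) volume b 1 :=
    ((continuousOn_const.mul hxp_cont).mono (by rw [huIcc])).intervalIntegrable
  have hibp := integral_mul_deriv_eq_deriv_mul hU hV h2uu' hcxp
  -- rewrite LHS of ibp
  have hlhs : ∫ x in b..1, (u x)^2 * (c * x ^ p) = c * ∫ x in b..1, (u x)^2 * x ^ p := by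
    rw [← intervalIntegral.integral_const_mul]
    apply intervalIntegral.integral_congr
    intro x _; ring
  rw [hlhs, hu1] at hibp
  -- hibp : c * ∫ = 0^2 * 1^c - (u b)^2 * b^c - ∫ 2uu' x^c
  have hI : IntervalIntegrable (fun x => (2 * u x * u' x) * x ^ c) volume b 1 :=
    h2uu'.mul_continuousOn (hxc_cont.mono (by rw [huIcc]))
  have hRHS : IntervalIntegrable
      (fun x => c/2 * ((u x)^2 * x ^ p) + 2/c * ((u' x)^2 * x ^ p)) volume b 1 :=
    (hint1.const_mul _).add (hint2.const_mul _)
  have hmono : ∫ x in b..1, -((2 * u x * u' x) * x ^ c) ≤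
      ∫ x in b..1, (c/2 * ((u x)^2 * x ^ p) + 2/c * ((u' x)^2 * x ^ p)) := by
    apply intervalIntegral.integral_mono_on hb1 hI.neg hRHS
    intro x hx
    simp only [Pi.neg_apply]
    have hx0 : 0 < x := hb.trans_le hx.1
    have hxc : x ^ c = x ^ p * x := by
      rw [hc_def, Real.rpow_add hx0, Real.rpow_one]
    have hxp0 : (0:ℝ) ≤ x ^ p := (Real.rpow_pos_of_pos hx0 p).le
    rw [hxc]
    have key : -(2 * u x * u' x * x) ≤ c/2 * (u x)^2 + 2/c * (u' x)^2 := by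
      have hx2 : x^2 ≤ 1 := by nlinarith [hx.2, hx0]
      have hR : (c/2 * (u x)^2 + 2/c * (u' x)^2) * c = c^2/2 * (u x)^2 + 2 * (u' x)^2 := by
        field_simp
      have hkey : -(2 * u x * u' x * x) * c ≤ (c/2 * (u x)^2 + 2/c * (u' x)^2) * c := by
        rw [hR]
        nlinarith [sq_nonneg (c * u x * x + 2 * u' x),
          mul_nonneg (sub_nonneg.2 hx2) (sq_nonneg (c * u x))]
      exact le_of_mul_le_mul_right hkey hc
    calc -(2 * u x * u' x * (x ^ p * x)) = -(2 * u x * u' x * x) * x ^ p := by ring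
      _ ≤ (c/2 * (u x)^2 + 2/c * (u' x)^2) * x ^ p := by
          exact mul_le_mul_of_nonneg_right key hxp0
      _ = c/2 * ((u x)^2 * x ^ p) + 2/c * ((u' x)^2 * x ^ p) := by ring
  rw [intervalIntegral.integral_neg] at hmono
  have hsplit : ∫ x in b..1, (c/2 * ((u x)^2 * x ^ p) + 2/c * ((u' x)^2 * x ^ p)) =
      c/2 * (∫ x in b..1, (u x)^2 * x ^ p) + 2/c * (∫ x in b..1, (u' x)^2 * x ^ p) := by
    rw [intervalIntegral.integral_add (hint1.const_mul _) (hint2.const_mul _),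
      intervalIntegral.integral_const_mul, intervalIntegral.integral_const_mul]
  rw [hsplit] at hmono
  set A := ∫ x in b..1, (u x)^2 * x ^ p
  set B := ∫ x in b..1, (u' x)^2 * x ^ p
  have hbc : (0:ℝ) ≤ (u b)^2 * b ^ c := by positivity
  -- from hibp : c * A = 0 - (u b)^2 * b^c - I  with I the integral
  have hcA : c * A ≤ c/2 * A + 2/c * B := by
    have h0 : (0:ℝ)^2 * (1:ℝ)^c = 0 := by norm_num
    rw [hibp, h0]
    linarith [hbc, hmono]
  have h1 : c/2 * A ≤ 2/c * B := by linarith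
  have := mul_le_mul_of_nonneg_left h1 (by positivity : (0:ℝ) ≤ 2/c)
  calc A = 2/c * (c/2 * A) := by field_simp
    _ ≤ 2/c * (2/c * B) := this
    _ = 4 / c^2 * B := by field_simp; ring

/-- Weighted Poincaré-type estimate on the unit interval: for `0 ≤ a < 1`,
`p ≥ 0` and `u ∈ H¹(a,1)` with `u 1 = 0`,
`∫_a^1 u² xᵖ ≤ (4/(p+1)²) ∫_a^1 (u')² xᵖ`. -/
theorem weighted_poincare_unit_interval (p a : ℝ) (hp : 0 ≤ p) (ha : 0 ≤ a) (ha1 : a < 1)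
    (u u' : ℝ → ℝ)
    (hderiv : ∀ x ∈ Set.Icc a 1, HasDerivAt u (u' x) x)
    (hu1 : u 1 = 0)
    (hint1 : IntervalIntegrable (fun x => (u x)^2 * x ^ p) volume a 1)
    (hint2 : IntervalIntegrable (fun x => (u' x)^2 * x ^ p) volume a 1) :
    ∫ x in a..1, (u x)^2 * x ^ p ≤ (4 / (p + 1)^2) * ∫ x in a..1, (u' x)^2 * x ^ p := by
  rcases ha.lt_or_eq with ha0 | ha0
  · exact wp_aux p a hp ha0 ha1.le u u' hderiv hu1 hint1 hint2
  · subst ha0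
    set f := fun x : ℝ => (u x)^2 * x ^ p with hf
    set g := fun x : ℝ => (u' x)^2 * x ^ p with hg
    have hsub : ∀ b ∈ Set.Ioc (0:ℝ) 1, Set.uIcc b 1 ⊆ Set.uIcc (0:ℝ) 1 := by
      intro b hb
      rw [Set.uIcc_of_le hb.2, Set.uIcc_of_le zero_le_one]
      exact Set.Icc_subset_Icc hb.1.le le_rfl
    have hsub0 : ∀ b ∈ Set.Ioc (0:ℝ) 1, Set.uIcc (0:ℝ) b ⊆ Set.uIcc (0:ℝ) 1 := by
      intro b hb
      rw [Set.uIcc_of_le hb.1.le, Set.uIcc_of_le zero_le_one]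
      exact Set.Icc_subset_Icc le_rfl hb.2
    have key : ∀ b ∈ Set.Ioc (0:ℝ) 1,
        (∫ x in (0:ℝ)..1, f x) - ∫ x in (0:ℝ)..b, f x ≤
        (4 / (p + 1)^2) * ((∫ x in (0:ℝ)..1, g x) - ∫ x in (0:ℝ)..b, g x) := by
      intro b hb
      have hf1 : IntervalIntegrable f volume b 1 := hint1.mono_set (hsub b hb)
      have hg1 : IntervalIntegrable g volume b 1 := hint2.mono_set (hsub b hb)
      have hf0 : IntervalIntegrable f volume 0 b := hint1.mono_set (hsub0 b hb)
      have hg0 : IntervalIntegrable g volume 0 b := hint2.mono_set (hsub0 b hb)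
      have h := wp_aux p b hp hb.1 hb.2 u u'
        (fun x hx => hderiv x ⟨hb.1.le.trans hx.1, hx.2⟩) hu1 hf1 hg1
      have e1 : (∫ x in (0:ℝ)..b, f x) + ∫ x in b..1, f x = ∫ x in (0:ℝ)..1, f x :=
        intervalIntegral.integral_add_adjacent_intervals hf0 hf1
      have e2 : (∫ x in (0:ℝ)..b, g x) + ∫ x in b..1, g x = ∫ x in (0:ℝ)..1, g x :=
        intervalIntegral.integral_add_adjacent_intervals hg0 hg1
      have e3 : (∫ x in (0:ℝ)..1, f x) - ∫ x in (0:ℝ)..b, f x = ∫ x in b..1, f x := by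
        linarith [e1]
      have e4 : (∫ x in (0:ℝ)..1, g x) - ∫ x in (0:ℝ)..b, g x = ∫ x in b..1, g x := by
        linarith [e2]
      rw [e3, e4]
      exact h
    have hne : (𝓝[Set.Ioc (0:ℝ) 1] (0:ℝ)).NeBot := by
      rw [nhdsWithin_Ioc_eq_nhdsGT zero_lt_one]
      infer_instance
    have tf : Tendsto (fun b => ∫ x in (0:ℝ)..b, f x) (𝓝[Set.Ioc (0:ℝ) 1] 0) (𝓝 0) := by
      have hc := intervalIntegral.continuousOn_primitive_interval' hint1
        (Set.left_mem_uIcc (a := (0:ℝ)) (b := 1))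
      have h2 : Tendsto (fun b => ∫ x in (0:ℝ)..b, f x)
          (𝓝[Set.Ioc (0:ℝ) 1] 0) (𝓝 (∫ x in (0:ℝ)..(0:ℝ), f x)) :=
        (hc 0 (Set.left_mem_uIcc)).mono
          (Set.Ioc_subset_Icc_self.trans (by rw [Set.uIcc_of_le zero_le_one]))
      simpa using h2
    have tg : Tendsto (fun b => ∫ x in (0:ℝ)..b, g x) (𝓝[Set.Ioc (0:ℝ) 1] 0) (𝓝 0) := by
      have hc := intervalIntegral.continuousOn_primitive_interval' hint2
        (Set.left_mem_uIcc (a := (0:ℝ)) (b := 1))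
      have h2 : Tendsto (fun b => ∫ x in (0:ℝ)..b, g x)
          (𝓝[Set.Ioc (0:ℝ) 1] 0) (𝓝 (∫ x in (0:ℝ)..(0:ℝ), g x)) :=
        (hc 0 (Set.left_mem_uIcc)).mono
          (Set.Ioc_subset_Icc_self.trans (by rw [Set.uIcc_of_le zero_le_one]))
      simpa using h2
    have tF : Tendsto (fun b => (∫ x in (0:ℝ)..1, f x) - ∫ x in (0:ℝ)..b, f x)
        (𝓝[Set.Ioc (0:ℝ) 1] 0) (𝓝 (∫ x in (0:ℝ)..1, f x)) := by
      simpa using tendsto_const_nhds.sub tf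
    have tG : Tendsto (fun b => (4 / (p + 1)^2) *
        ((∫ x in (0:ℝ)..1, g x) - ∫ x in (0:ℝ)..b, g x))
        (𝓝[Set.Ioc (0:ℝ) 1] 0) (𝓝 ((4 / (p + 1)^2) * ∫ x in (0:ℝ)..1, g x)) := by
      simpa using (tendsto_const_nhds.sub tg).const_mul (4 / (p + 1)^2)
    exact le_of_tendsto_of_tendsto tF tG (eventually_mem_nhdsWithin.mono (fun b hb => key b hb))
end

section
/- Let φ(x,t) = |x|² − t on ℝ^d × [0,δ] (degenerating island normal form) and let Q_ε^c = {(x,t) : 0 ≤ t ≤ δ, max(t−3ε,0) ≤ |x|² ≤ t}. Then for every u ∈ C¹ with u(x,t) = 0 whenever |x|² = t, it holds that ε⁻² ∫_{Q_ε^c} |x|² u² dx dt ≤ 9 C ∫_{Q_ε^c} |∇_x u|² dx dt, where C is the constant from the weighted 1D Hardy inequality with weight r^{d-1}. -/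
open Set Metric MeasureTheory ENNReal

lemma lintegral_sphere_decomp {E : Type*} [NormedAddCommGroup E] [NormedSpace ℝ E]
    [MeasurableSpace E] [BorelSpace E] [FiniteDimensional ℝ E] [Nontrivial E]
    (μ : Measure E) [μ.IsAddHaarMeasure]
    (F : E → ℝ≥0∞) (hF : Measurable F) :
    ∫⁻ x, F x ∂μ =
      ∫⁻ ω : sphere (0:E) 1, ∫⁻ r in Set.Ioi (0:ℝ),
        ENNReal.ofReal (r ^ (Module.finrank ℝ E - 1)) * F (r • (ω:E)) ∂volume ∂μ.toSphere := by
  have h1 : ∫⁻ x, F x ∂μ = ∫⁻ x : ({0}ᶜ : Set E), F x ∂(μ.comap (↑)) := by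
    rw [lintegral_subtype_comap (measurableSet_singleton (0:E)).compl,
      MeasureTheory.restrict_compl_singleton]
  have hG : Measurable fun p : sphere (0:E) 1 × Ioi (0:ℝ) => F (p.2.1 • (p.1:E)) :=
    hF.comp ((measurable_subtype_coe.comp measurable_snd).smul
      (measurable_subtype_coe.comp measurable_fst))
  have h2 : ∫⁻ x : ({0}ᶜ : Set E), F x ∂(μ.comap (↑)) =
      ∫⁻ p : sphere (0:E) 1 × Ioi (0:ℝ), F (p.2.1 • (p.1:E))
        ∂(μ.toSphere.prod (Measure.volumeIoiPow (Module.finrank ℝ E - 1))) := by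
    rw [← μ.measurePreserving_homeomorphUnitSphereProd.lintegral_comp hG]
    refine lintegral_congr fun x => ?_
    congr 1
    have := congrArg Subtype.val ((homeomorphUnitSphereProd E).symm_apply_apply x)
    rw [homeomorphUnitSphereProd_symm_apply_coe] at this
    exact this.symm ▸ rfl
  rw [h1, h2, lintegral_prod _ hG.aemeasurable]
  refine lintegral_congr fun ω => ?_
  show ∫⁻ y : Ioi (0:ℝ), F ((y:ℝ) • (ω:E)) ∂(Measure.volumeIoiPow (Module.finrank ℝ E - 1)) = _
  rw [Measure.volumeIoiPow,
    lintegral_withDensity_eq_lintegral_mul _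
      (by fun_prop) (show Measurable fun y : Ioi (0:ℝ) => F ((y:ℝ) • (ω:E)) from hF.comp (measurable_subtype_coe.smul measurable_const))]
  simp only [Pi.mul_apply]
  rw [lintegral_subtype_comap measurableSet_Ioi
    (fun r : ℝ => ENNReal.ofReal (r ^ (Module.finrank ℝ E - 1)) * F (r • (ω:E)))]
open Set Metric MeasureTheory intervalIntegral ENNReal

lemma slice_ineq (d : ℕ) (hd : 1 ≤ d) (ε C : ℝ) (hε : 0 < ε) (hC : 0 ≤ C)
    (a b t : ℝ) (ha : 0 ≤ a) (hab : a < b) (hb2 : b^2 = t) (ha2 : a^2 = max (t - 3*ε) 0)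
    (f f' G : ℝ → ℝ) (hf : Continuous f) (hder : ∀ r, HasDerivAt f (f' r) r)
    (hf' : Continuous f') (hGc : Continuous G) (hfb : f b = 0) (hG : ∀ r, (f' r)^2 ≤ G r)
    (hHardy : ∀ (a b : ℝ) (f f' : ℝ → ℝ), 0 ≤ a → a < b →
      (∀ r ∈ Set.Icc a b, HasDerivAt f (f' r) r) → f b = 0 →
      IntervalIntegrable (fun r => (f r / (b - r))^2 * r ^ ((d : ℝ) - 1)) volume a b →
      IntervalIntegrable (fun r => (f' r)^2 * r ^ ((d : ℝ) - 1)) volume a b →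
      ∫ r in a..b, (f r / (b - r))^2 * r ^ ((d : ℝ) - 1) ≤
        C * ∫ r in a..b, (f' r)^2 * r ^ ((d : ℝ) - 1)) :
    ∫ r in a..b, (r^2 * (f r)^2) * r ^ (d - 1) ≤
      (9 * ε^2 * C) * ∫ r in a..b, G r * r ^ (d - 1) := by
  have hrpow : ∀ r : ℝ, r ^ ((d : ℝ) - 1) = r ^ (d - 1) := fun r => by
    rw [← Real.rpow_natCast r (d - 1), Nat.cast_sub hd, Nat.cast_one]
  -- bound on f'
  obtain ⟨M, hM⟩ := isCompact_Icc.exists_bound_of_continuousOn (s := Icc a b) hf'.continuousOn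
  have hM0 : 0 ≤ M := le_trans (norm_nonneg _) (hM a ⟨le_refl a, hab.le⟩)
  -- |f r| ≤ M * (b - r) on Icc a b
  have hflin : ∀ r ∈ Icc a b, |f r| ≤ M * (b - r) := by
    intro r hr
    have := (convex_Icc a b).norm_image_sub_le_of_norm_hasDerivWithin_le
      (fun x hx => (hder x).hasDerivWithinAt) hM (right_mem_Icc.2 hab.le) hr
    calc |f r| = ‖f r - f b‖ := by rw [hfb, sub_zero]; rfl
    _ ≤ M * ‖r - b‖ := this
    _ = M * (b - r) := by rw [Real.norm_eq_abs, abs_sub_comm, abs_of_nonneg (by linarith [hr.2])]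
  have hq : ∀ r ∈ Icc a b, |f r / (b - r)| ≤ M := by
    intro r hr
    rcases eq_or_lt_of_le hr.2 with h | h
    · simp [h, hfb, hM0]
    · rw [abs_div, abs_of_pos (by linarith : (0:ℝ) < b - r), div_le_iff₀ (by linarith)]
      exact (hflin r hr).trans (by rw [mul_comm])
  -- integrability of the singular integrand
  have hmeas : Measurable fun r => (f r / (b - r))^2 * r ^ (d - 1) :=
    ((hf.measurable.div (continuous_const.sub continuous_id).measurable).pow_const 2).mul
      (measurable_id.pow_const _)
  have hI1int : IntervalIntegrable (fun r => (f r / (b - r))^2 * r ^ (d - 1)) volume a b := by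
    rw [intervalIntegrable_iff_integrableOn_Ioc_of_le hab.le]
    refine Integrable.mono' (g := fun _ => M^2 * |b| ^ (d-1))
      (integrableOn_const measure_Ioc_lt_top.ne) hmeas.aestronglyMeasurable ?_
    filter_upwards [ae_restrict_mem measurableSet_Ioc] with r hr
    have hr0 : 0 ≤ r := le_trans ha hr.1.le
    rw [Real.norm_eq_abs, abs_mul, abs_pow, abs_pow, sq_abs]
    refine mul_le_mul (by
        have := hq r ⟨hr.1.le, hr.2⟩
        calc (f r / (b-r))^2 = |f r / (b-r)|^2 := (sq_abs _).symm
        _ ≤ M^2 := by nlinarith [abs_nonneg (f r / (b-r))])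
      (pow_le_pow_left₀ (abs_nonneg r) (by rw [abs_of_nonneg hr0, abs_of_nonneg (hr0.trans hr.2)]; exact hr.2) _)
      (pow_nonneg (abs_nonneg _) _) (sq_nonneg M)
  have hI2int : IntervalIntegrable (fun r => (f' r)^2 * r ^ (d - 1)) volume a b :=
    (((hf'.pow 2).mul (continuous_pow _))).intervalIntegrable a b
  -- step 1 : pointwise collar bound
  have step1 : ∫ r in a..b, (r^2 * (f r)^2) * r ^ (d - 1) ≤
      (9 * ε^2) * ∫ r in a..b, (f r / (b - r))^2 * r ^ (d - 1) := by
    rw [← intervalIntegral.integral_const_mul]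
    refine integral_mono_on hab.le
      ((((continuous_pow 2).mul (hf.pow 2)).mul (continuous_pow _)).intervalIntegrable a b)
      (hI1int.const_mul _) ?_
    intro r hr
    have hr0 : 0 ≤ r := le_trans ha hr.1
    have hkey : r^2 * (f r)^2 ≤ 9 * ε^2 * (f r / (b - r))^2 := by
      rcases eq_or_lt_of_le hr.2 with h | h
      · rw [← h] at hfb ⊢
        simp [hfb]
      · have hbr : 0 < b - r := by linarith
        have h3 : b^2 - r^2 ≤ 3 * ε := by
          have : a^2 ≤ r^2 := by nlinarith [hr.1]
          have : t - 3*ε ≤ r^2 := le_trans (le_max_left _ _) (ha2 ▸ this)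
          nlinarith
        have hrb : r * (b - r) ≤ 3 * ε := by nlinarith [hr.2, hr.1]
        have h4 : (r * (b - r))^2 ≤ (3*ε)^2 := by
          nlinarith [mul_nonneg hr0 hbr.le]
        have heq : r^2 * (f r)^2 = (r * (b-r))^2 * (f r / (b-r))^2 := by
          field_simp
        rw [heq]
        nlinarith [sq_nonneg (f r / (b - r))]
    calc (r^2 * (f r)^2) * r ^ (d-1) ≤ (9 * ε^2 * (f r / (b-r))^2) * r ^ (d-1) :=
      mul_le_mul_of_nonneg_right hkey (pow_nonneg hr0 _)
    _ = 9 * ε^2 * ((f r / (b-r))^2 * r ^ (d-1)) := by ring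
  -- step 2 : Hardy
  have step2 : ∫ r in a..b, (f r / (b - r))^2 * r ^ (d - 1) ≤
      C * ∫ r in a..b, (f' r)^2 * r ^ (d - 1) := by
    have := hHardy a b f f' ha hab (fun r _ => hder r) hfb
      (by simpa only [hrpow] using hI1int) (by simpa only [hrpow] using hI2int)
    simpa only [hrpow] using this
  -- step 3 : replace (f')² by G
  have step3 : ∫ r in a..b, (f' r)^2 * r ^ (d - 1) ≤ ∫ r in a..b, G r * r ^ (d - 1) := by
    refine integral_mono_on hab.le hI2int ((hGc.mul (continuous_pow _)).intervalIntegrable a b) ?_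
    intro r hr
    exact mul_le_mul_of_nonneg_right (hG r) (pow_nonneg (le_trans ha hr.1) _)
  calc ∫ r in a..b, (r^2 * (f r)^2) * r ^ (d - 1)
      ≤ (9 * ε^2) * ∫ r in a..b, (f r / (b - r))^2 * r ^ (d - 1) := step1
    _ ≤ (9 * ε^2) * (C * ∫ r in a..b, (f' r)^2 * r ^ (d - 1)) :=
        mul_le_mul_of_nonneg_left step2 (by positivity)
    _ ≤ (9 * ε^2) * (C * ∫ r in a..b, G r * r ^ (d - 1)) :=
        mul_le_mul_of_nonneg_left (mul_le_mul_of_nonneg_left step3 hC) (by positivity)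
    _ = (9 * ε^2 * C) * ∫ r in a..b, G r * r ^ (d - 1) := by ring
open Set Metric MeasureTheory intervalIntegral ENNReal

lemma lint_slice (a b : ℝ) (ha : 0 ≤ a) (hab : a ≤ b) (n : ℕ) (ψ : ℝ → ℝ)
    (hψ : Continuous ψ) (hψ0 : ∀ r, 0 ≤ ψ r) :
    ∫⁻ r in Set.Ioi (0:ℝ), ENNReal.ofReal (r ^ n) * ENNReal.ofReal ((Set.Icc a b).indicator ψ r) =
      ENNReal.ofReal (∫ r in a..b, ψ r * r ^ n) := by
  have hA : ∫⁻ r in Set.Ioi (0:ℝ), ENNReal.ofReal (r ^ n) *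
        ENNReal.ofReal ((Set.Icc a b).indicator ψ r) =
      ∫⁻ r in Set.Ioi (0:ℝ), (Set.Icc a b).indicator (fun r => ENNReal.ofReal (ψ r * r ^ n)) r := by
    refine setLIntegral_congr_fun measurableSet_Ioi (fun r hr => ?_)
    by_cases h : r ∈ Icc a b
    · rw [Set.indicator_of_mem h, Set.indicator_of_mem h, ← ENNReal.ofReal_mul (pow_nonneg (le_of_lt hr) n),
        mul_comm (r ^ n) (ψ r)]
    · rw [Set.indicator_of_notMem h, Set.indicator_of_notMem h, ENNReal.ofReal_zero, mul_zero]
  rw [hA, lintegral_indicator measurableSet_Icc, Measure.restrict_restrict measurableSet_Icc]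
  have hset : (Icc a b ∩ Ioi 0 : Set ℝ) =ᵐ[volume] (Ioc a b : Set ℝ) := by
    rw [Filter.eventuallyEq_set]
    have h1 : volume ({a} : Set ℝ) = 0 := measure_singleton a
    refine (measure_eq_zero_iff_ae_notMem.mp h1).mono fun r hr => ?_
    simp only [Set.mem_inter_iff, Set.mem_Icc, Set.mem_Ioi, Set.mem_Ioc, Set.mem_singleton_iff] at hr ⊢
    constructor
    · rintro ⟨⟨h2, h3⟩, h4⟩
      exact ⟨lt_of_le_of_ne h2 (Ne.symm hr), h3⟩
    · rintro ⟨h2, h3⟩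
      exact ⟨⟨h2.le, h3⟩, lt_of_le_of_lt ha h2⟩
  rw [Measure.restrict_congr_set hset,
    ← ofReal_integral_eq_lintegral_ofReal (f := fun r => ψ r * r ^ n) ((hψ.mul (continuous_pow n)).integrableOn_Ioc)
      (by filter_upwards [ae_restrict_mem measurableSet_Ioc] with r hr
          exact mul_nonneg (hψ0 r) (pow_nonneg (le_trans ha hr.1.le) n)),
    intervalIntegral.integral_of_le hab]
open Set Metric MeasureTheory intervalIntegral ENNReal

/-- Key collar estimate for the degenerating island (normal form
`φ(x,t) = |x|² − t`): on the collar
`Q_ε^c = {(x,t) : 0 ≤ t ≤ δ, max(t−3ε,0) ≤ |x|² ≤ t}`, for every `C¹`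
function `u` vanishing on the boundary `{|x|² = t}`,
`ε⁻² ∫_{Q_ε^c} |x|² u² ≤ 9C ∫_{Q_ε^c} |∇ₓu|²`, where `C` is the constant of
the weighted 1D Hardy inequality with weight `r^{d−1}`. -/
theorem island_collar_estimate (d : ℕ) (hd : 1 ≤ d) (δ ε C : ℝ)
    (hδ : 0 < δ) (hε : 0 < ε) (hC : 0 ≤ C)
    (hHardy : ∀ (a b : ℝ) (f f' : ℝ → ℝ), 0 ≤ a → a < b →
      (∀ r ∈ Set.Icc a b, HasDerivAt f (f' r) r) → f b = 0 →
      IntervalIntegrable (fun r => (f r / (b - r))^2 * r ^ ((d : ℝ) - 1)) volume a b →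
      IntervalIntegrable (fun r => (f' r)^2 * r ^ ((d : ℝ) - 1)) volume a b →
      ∫ r in a..b, (f r / (b - r))^2 * r ^ ((d : ℝ) - 1) ≤
        C * ∫ r in a..b, (f' r)^2 * r ^ ((d : ℝ) - 1)) :
    ∀ u : EuclideanSpace ℝ (Fin d) × ℝ → ℝ, ContDiff ℝ 1 u →
      (∀ p : EuclideanSpace ℝ (Fin d) × ℝ, ‖p.1‖^2 = p.2 → u p = 0) →
      (ε^2)⁻¹ * (∫ p in {p : EuclideanSpace ℝ (Fin d) × ℝ |
            p.2 ∈ Set.Icc 0 δ ∧ max (p.2 - 3*ε) 0 ≤ ‖p.1‖^2 ∧ ‖p.1‖^2 ≤ p.2},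
            ‖p.1‖^2 * (u p)^2) ≤
        9 * C * ∫ p in {p : EuclideanSpace ℝ (Fin d) × ℝ |
            p.2 ∈ Set.Icc 0 δ ∧ max (p.2 - 3*ε) 0 ≤ ‖p.1‖^2 ∧ ‖p.1‖^2 ≤ p.2},
            ‖fderiv ℝ (fun x => u (x, p.2)) p.1‖^2 := by
  intro u hu hu0
  haveI : Nonempty (Fin d) := ⟨⟨0, hd⟩⟩
  haveI : Nontrivial (EuclideanSpace ℝ (Fin d)) := inferInstance
  have hfr : Module.finrank ℝ (EuclideanSpace ℝ (Fin d)) = d := finrank_euclideanSpace_fin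
  set S : Set (EuclideanSpace ℝ (Fin d) × ℝ) :=
    {p : EuclideanSpace ℝ (Fin d) × ℝ |
      p.2 ∈ Set.Icc 0 δ ∧ max (p.2 - 3*ε) 0 ≤ ‖p.1‖^2 ∧ ‖p.1‖^2 ≤ p.2} with hSdef
  have hScl : IsClosed S := by
    have h1 : IsClosed {p : EuclideanSpace ℝ (Fin d) × ℝ | p.2 ∈ Set.Icc 0 δ} := isClosed_Icc.preimage continuous_snd
    have h2 : IsClosed {p : EuclideanSpace ℝ (Fin d) × ℝ | max (p.2 - 3*ε) 0 ≤ ‖p.1‖^2} :=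
      isClosed_le (by fun_prop) (by fun_prop)
    have h3 : IsClosed {p : EuclideanSpace ℝ (Fin d) × ℝ | ‖p.1‖^2 ≤ p.2} := isClosed_le (by fun_prop) continuous_snd
    exact h1.inter (h2.inter h3)
  have hS : MeasurableSet S := hScl.measurableSet
  have hSb : Bornology.IsBounded S := by
    have hsub : S ⊆ (Metric.closedBall (0:EuclideanSpace ℝ (Fin d)) (Real.sqrt δ)) ×ˢ (Set.Icc 0 δ) := by
      rintro ⟨x, t⟩ ⟨ht, _, hxt⟩
      refine ⟨?_, ht⟩
      simp only [Metric.mem_closedBall, dist_zero_right]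
      have h1 : ‖x‖^2 ≤ δ := hxt.trans ht.2
      nlinarith [Real.sq_sqrt hδ.le, Real.sqrt_nonneg δ, norm_nonneg x]
    exact (Metric.isBounded_closedBall.prod (Metric.isBounded_Icc 0 δ)).subset hsub
  have hScomp : IsCompact S := Metric.isCompact_of_isClosed_isBounded hScl hSb
  set g1 : EuclideanSpace ℝ (Fin d) × ℝ → ℝ := fun p => ‖p.1‖^2 * (u p)^2 with hg1def
  set g2 : EuclideanSpace ℝ (Fin d) × ℝ → ℝ := fun p => ‖fderiv ℝ (fun x => u (x, p.2)) p.1‖^2 with hg2def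
  have hg1c : Continuous g1 := (continuous_fst.norm.pow 2).mul (hu.continuous.pow 2)
  have hpd : ∀ p : EuclideanSpace ℝ (Fin d) × ℝ, fderiv ℝ (fun x => u (x, p.2)) p.1 =
      (fderiv ℝ u p).comp (ContinuousLinearMap.inl ℝ (EuclideanSpace ℝ (Fin d)) ℝ) := by
    intro p
    have h1 : HasFDerivAt (fun x : EuclideanSpace ℝ (Fin d) => (x, p.2)) (ContinuousLinearMap.inl ℝ (EuclideanSpace ℝ (Fin d)) ℝ) p.1 :=
      hasFDerivAt_prodMk_left _ _
    have h2 : HasFDerivAt u (fderiv ℝ u p) p := (hu.differentiable one_ne_zero p).hasFDerivAt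
    exact (h2.comp p.1 h1).fderiv
  have hfdu : Continuous (fderiv ℝ u) := hu.continuous_fderiv one_ne_zero
  have hg2c : Continuous g2 := by
    have h : Continuous fun p : EuclideanSpace ℝ (Fin d) × ℝ =>
        ‖(fderiv ℝ u p).comp (ContinuousLinearMap.inl ℝ (EuclideanSpace ℝ (Fin d)) ℝ)‖^2 :=
      ((hfdu.clm_comp continuous_const).norm.pow 2)
    exact h.congr fun p => by rw [hg2def]; simp only; rw [hpd]
  have hg1nn : ∀ p, 0 ≤ g1 p := fun p => by rw [hg1def]; positivity
  have hg2nn : ∀ p, 0 ≤ g2 p := fun p => by rw [hg2def]; positivity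
  set L1 : ℝ≥0∞ := ∫⁻ p, ENNReal.ofReal (S.indicator g1 p) with hL1def
  set L2 : ℝ≥0∞ := ∫⁻ p, ENNReal.ofReal (S.indicator g2 p) with hL2def
  have hIrepr : ∀ (g : EuclideanSpace ℝ (Fin d) × ℝ → ℝ), Continuous g → (∀ p, 0 ≤ g p) →
      ∫ p in S, g p = (∫⁻ p, ENNReal.ofReal (S.indicator g p)).toReal := by
    intro g hg hg0
    rw [MeasureTheory.integral_eq_lintegral_of_nonneg_ae
        (Filter.Eventually.of_forall fun p => hg0 p) hg.aestronglyMeasurable.restrict]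
    congr 1
    rw [← lintegral_indicator hS]
    refine lintegral_congr fun p => ?_
    by_cases hp : p ∈ S
    · simp [Set.indicator_of_mem hp]
    · simp [Set.indicator_of_notMem hp]
  have hdecomp : ∀ (g : EuclideanSpace ℝ (Fin d) × ℝ → ℝ), Measurable g →
      (∫⁻ p, ENNReal.ofReal (S.indicator g p)) =
      ∫⁻ t : ℝ, ∫⁻ ω : sphere (0:EuclideanSpace ℝ (Fin d)) 1, ∫⁻ r in Set.Ioi (0:ℝ),
        ENNReal.ofReal (r ^ (d - 1)) * ENNReal.ofReal (S.indicator g (r • (ω:EuclideanSpace ℝ (Fin d)), t))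
        ∂volume ∂((volume : Measure (EuclideanSpace ℝ (Fin d))).toSphere) ∂volume := by
    intro g hg
    have hm : Measurable fun p : EuclideanSpace ℝ (Fin d) × ℝ => ENNReal.ofReal (S.indicator g p) :=
      ENNReal.measurable_ofReal.comp (hg.indicator hS)
    rw [MeasureTheory.Measure.volume_eq_prod, lintegral_prod_symm _ hm.aemeasurable]
    refine lintegral_congr fun t => ?_
    have h := lintegral_sphere_decomp (volume : Measure (EuclideanSpace ℝ (Fin d)))
      (fun x => ENNReal.ofReal (S.indicator g (x, t)))
      (ENNReal.measurable_ofReal.comp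
        ((hg.indicator hS).comp (measurable_id.prodMk measurable_const)))
    rw [hfr] at h
    exact h
  have hmid : ∀ (t : ℝ) (ω : sphere (0:EuclideanSpace ℝ (Fin d)) 1),
      (∫⁻ r in Set.Ioi (0:ℝ), ENNReal.ofReal (r ^ (d - 1)) *
        ENNReal.ofReal (S.indicator g1 (r • (ω:EuclideanSpace ℝ (Fin d)), t)) ∂volume) ≤
      ENNReal.ofReal (9 * ε^2 * C) * ∫⁻ r in Set.Ioi (0:ℝ), ENNReal.ofReal (r ^ (d - 1)) *
        ENNReal.ofReal (S.indicator g2 (r • (ω:EuclideanSpace ℝ (Fin d)), t)) ∂volume := by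
    intro t ω
    have hω : ‖(ω:EuclideanSpace ℝ (Fin d))‖ = 1 := mem_sphere_zero_iff_norm.mp ω.2
    have hnorm : ∀ r : ℝ, ‖r • (ω:EuclideanSpace ℝ (Fin d))‖^2 = r^2 := fun r => by
      rw [norm_smul, hω, mul_one, Real.norm_eq_abs, sq_abs]
    by_cases ht : 0 < t ∧ t ≤ δ
    · set b := Real.sqrt t with hbdef
      set a := Real.sqrt (max (t - 3*ε) 0) with hadef
      have hb2 : b^2 = t := Real.sq_sqrt ht.1.le
      have ha2 : a^2 = max (t - 3*ε) 0 := Real.sq_sqrt (le_max_right _ _)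
      have ha : 0 ≤ a := Real.sqrt_nonneg _
      have hab : a < b := by
        apply Real.sqrt_lt_sqrt (le_max_right _ _)
        exact max_lt (by linarith [ht.1]) ht.1
      have hmem : ∀ r : ℝ, 0 < r → ((r • (ω:EuclideanSpace ℝ (Fin d)), t) ∈ S ↔ r ∈ Set.Icc a b) := by
        intro r hr
        simp only [hSdef, Set.mem_setOf_eq, hnorm r, Set.mem_Icc]
        constructor
        · rintro ⟨h1, h2, h3⟩
          constructor
          · rw [← Real.sqrt_sq hr.le]; exact Real.sqrt_le_sqrt h2
          · rw [← Real.sqrt_sq hr.le]; exact Real.sqrt_le_sqrt h3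
        · rintro ⟨h1, h2⟩
          refine ⟨⟨ht.1.le, ht.2⟩, ?_, ?_⟩
          · calc max (t - 3*ε) 0 = a^2 := ha2.symm
              _ ≤ r^2 := by nlinarith
          · calc r^2 ≤ b^2 := by nlinarith
              _ = t := hb2
      have hindic : ∀ (g : EuclideanSpace ℝ (Fin d) × ℝ → ℝ) (r : ℝ), r ∈ Set.Ioi (0:ℝ) →
          ENNReal.ofReal (r ^ (d-1)) * ENNReal.ofReal (S.indicator g (r • (ω:EuclideanSpace ℝ (Fin d)), t)) =
          ENNReal.ofReal (r ^ (d-1)) *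
            ENNReal.ofReal ((Set.Icc a b).indicator (fun s => g (s • (ω:EuclideanSpace ℝ (Fin d)), t)) r) := by
        intro g r hr
        congr 2
        by_cases h : r ∈ Set.Icc a b
        · rw [Set.indicator_of_mem h, Set.indicator_of_mem ((hmem r hr).mpr h)]
        · rw [Set.indicator_of_notMem h,
            Set.indicator_of_notMem (fun hm => h ((hmem r hr).mp hm))]
      rw [setLIntegral_congr_fun measurableSet_Ioi (hindic g1),
          setLIntegral_congr_fun measurableSet_Ioi (hindic g2)]
      set f : ℝ → ℝ := fun r => u (r • (ω:EuclideanSpace ℝ (Fin d)), t) with hfdef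
      have hψ1eq : (fun s : ℝ => g1 (s • (ω:EuclideanSpace ℝ (Fin d)), t)) = fun s => s^2 * (f s)^2 := by
        funext s
        rw [hg1def, hfdef]
        simp only
        rw [hnorm s]
      rw [hψ1eq]
      have hvcd : ContDiff ℝ 1 (fun x : EuclideanSpace ℝ (Fin d) => u (x, t)) :=
        hu.comp (contDiff_id.prodMk contDiff_const)
      have hsm : Continuous fun r : ℝ => r • (ω:EuclideanSpace ℝ (Fin d)) := continuous_id.smul continuous_const
      have hfc : Continuous f := hu.continuous.comp (hsm.prodMk continuous_const)
      set f' : ℝ → ℝ := fun r => (fderiv ℝ (fun x : EuclideanSpace ℝ (Fin d) => u (x, t)) (r • (ω:EuclideanSpace ℝ (Fin d)))) (ω:EuclideanSpace ℝ (Fin d))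
        with hf'def
      have hder : ∀ r, HasDerivAt f (f' r) r := by
        intro r
        have h1 : HasDerivAt (fun r : ℝ => r • (ω:EuclideanSpace ℝ (Fin d))) (ω:EuclideanSpace ℝ (Fin d)) r := by
          simpa using (hasDerivAt_id r).smul_const (ω:EuclideanSpace ℝ (Fin d))
        exact (hvcd.differentiable one_ne_zero _).hasFDerivAt.comp_hasDerivAt r h1
      have hf'c : Continuous f' :=
        ((hvcd.continuous_fderiv one_ne_zero).comp hsm).clm_apply continuous_const
      have hψ2c : Continuous fun s : ℝ => g2 (s • (ω:EuclideanSpace ℝ (Fin d)), t) :=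
        hg2c.comp (hsm.prodMk continuous_const)
      have hfb : f b = 0 := hu0 _ (by simpa [hnorm b] using hb2)
      have hG : ∀ r, (f' r)^2 ≤ g2 (r • (ω:EuclideanSpace ℝ (Fin d)), t) := by
        intro r
        have hop := (fderiv ℝ (fun x : EuclideanSpace ℝ (Fin d) => u (x, t)) (r • (ω:EuclideanSpace ℝ (Fin d)))).le_opNorm (ω:EuclideanSpace ℝ (Fin d))
        rw [hω, mul_one] at hop
        have habs : |f' r| ≤ ‖fderiv ℝ (fun x : EuclideanSpace ℝ (Fin d) => u (x, t)) (r • (ω:EuclideanSpace ℝ (Fin d)))‖ := by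
          simpa [Real.norm_eq_abs] using hop
        calc (f' r)^2 = |f' r|^2 := (sq_abs _).symm
          _ ≤ ‖fderiv ℝ (fun x : EuclideanSpace ℝ (Fin d) => u (x, t)) (r • (ω:EuclideanSpace ℝ (Fin d)))‖^2 :=
              pow_le_pow_left₀ (abs_nonneg _) habs 2
          _ = g2 (r • (ω:EuclideanSpace ℝ (Fin d)), t) := by rw [hg2def]
      rw [lint_slice a b ha hab.le (d-1) (fun s => s^2 * (f s)^2) ((continuous_pow 2).mul (hfc.pow 2))
            (fun r => by show 0 ≤ r^2 * (f r)^2; positivity),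
          lint_slice a b ha hab.le (d-1) _ hψ2c (fun r => hg2nn _),
          ← ENNReal.ofReal_mul (by positivity)]
      exact ENNReal.ofReal_le_ofReal
        (slice_ineq d hd ε C hε hC a b t ha hab hb2 ha2 f f' _ hfc hder hf'c hψ2c hfb hG hHardy)
    · have hzero : ∀ r, r ∈ Set.Ioi (0:ℝ) →
          ENNReal.ofReal (r ^ (d-1)) * ENNReal.ofReal (S.indicator g1 (r • (ω:EuclideanSpace ℝ (Fin d)), t)) = 0 := by
        intro r hr
        have h0 : S.indicator g1 (r • (ω:EuclideanSpace ℝ (Fin d)), t) = 0 := by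
          refine Set.indicator_of_notMem ?_ _
          rintro ⟨h1, h2, h3⟩
          rw [hnorm r] at h3
          exact ht ⟨by nlinarith [hr.out], h1.2⟩
        rw [h0, ENNReal.ofReal_zero, mul_zero]
      rw [setLIntegral_congr_fun measurableSet_Ioi hzero]
      simp
  have hL2fin : L2 ≠ ⊤ := by
    obtain ⟨K, hK⟩ := hScomp.exists_bound_of_continuousOn hg2c.continuousOn
    have heq : L2 = ∫⁻ p in S, ENNReal.ofReal (g2 p) := by
      rw [hL2def, ← lintegral_indicator hS]
      refine lintegral_congr fun p => ?_
      by_cases hp : p ∈ S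
      · simp [Set.indicator_of_mem hp]
      · simp [Set.indicator_of_notMem hp]
    rw [heq]
    have hb : ∫⁻ p in S, ENNReal.ofReal (g2 p) ≤ ∫⁻ _ in S, ENNReal.ofReal K := by
      refine lintegral_mono_ae ?_
      filter_upwards [ae_restrict_mem hS] with p hp
      exact ENNReal.ofReal_le_ofReal ((le_abs_self _).trans (by simpa using hK p hp))
    refine ne_of_lt (lt_of_le_of_lt hb ?_)
    rw [setLIntegral_const]
    exact ENNReal.mul_lt_top ENNReal.ofReal_lt_top hScomp.measure_lt_top
  have hmain : L1 ≤ ENNReal.ofReal (9 * ε^2 * C) * L2 := by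
    rw [hL1def, hL2def, hdecomp g1 hg1c.measurable, hdecomp g2 hg2c.measurable]
    calc ∫⁻ t : ℝ, ∫⁻ ω : sphere (0:EuclideanSpace ℝ (Fin d)) 1, ∫⁻ r in Set.Ioi (0:ℝ),
          ENNReal.ofReal (r ^ (d-1)) * ENNReal.ofReal (S.indicator g1 (r • (ω:EuclideanSpace ℝ (Fin d)), t))
          ∂volume ∂((volume : Measure (EuclideanSpace ℝ (Fin d))).toSphere) ∂volume
        ≤ ∫⁻ t : ℝ, ∫⁻ ω : sphere (0:EuclideanSpace ℝ (Fin d)) 1, ENNReal.ofReal (9 * ε^2 * C) *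
            ∫⁻ r in Set.Ioi (0:ℝ), ENNReal.ofReal (r ^ (d-1)) *
            ENNReal.ofReal (S.indicator g2 (r • (ω:EuclideanSpace ℝ (Fin d)), t))
            ∂volume ∂((volume : Measure (EuclideanSpace ℝ (Fin d))).toSphere) ∂volume :=
          lintegral_mono fun t => lintegral_mono fun ω => hmid t ω
      _ = ENNReal.ofReal (9 * ε^2 * C) * ∫⁻ t : ℝ, ∫⁻ ω : sphere (0:EuclideanSpace ℝ (Fin d)) 1,
            ∫⁻ r in Set.Ioi (0:ℝ), ENNReal.ofReal (r ^ (d-1)) *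
            ENNReal.ofReal (S.indicator g2 (r • (ω:EuclideanSpace ℝ (Fin d)), t))
            ∂volume ∂((volume : Measure (EuclideanSpace ℝ (Fin d))).toSphere) ∂volume := by
          rw [← lintegral_const_mul' _ _ ENNReal.ofReal_ne_top]
          exact lintegral_congr fun t => (lintegral_const_mul' _ _ ENNReal.ofReal_ne_top)
  have hIeq : (∫ p in S, g1 p) = L1.toReal := by
    rw [hL1def]; exact hIrepr g1 hg1c hg1nn
  have hJeq : (∫ p in S, g2 p) = L2.toReal := by
    rw [hL2def]; exact hIrepr g2 hg2c hg2nn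
  rw [hIeq, hJeq]
  have h1 : L1.toReal ≤ 9 * ε^2 * C * L2.toReal := by
    have h2 := ENNReal.toReal_mono (ENNReal.mul_ne_top ENNReal.ofReal_ne_top hL2fin) hmain
    rwa [ENNReal.toReal_mul, ENNReal.toReal_ofReal (by positivity)] at h2
  have hεne : ε ≠ 0 := ne_of_gt hε
  calc (ε^2)⁻¹ * L1.toReal ≤ (ε^2)⁻¹ * (9 * ε^2 * C * L2.toReal) :=
        mul_le_mul_of_nonneg_left h1 (by positivity)
    _ = 9 * C * L2.toReal := by field_simp
end
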